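/- Necessity part of the pointbased criterion: let S : X ⇉ Y be a set-valued mapping between Banach spaces, Ω ⊆ X, and suppose S is Lipschitz-like relative to Ω around (x̄, ȳ) ∈ gph S|_Ω with constant κ. Then (a) S is PSNC relative to Ω at (x̄, ȳ), and (b) the outer norm of the relative mixed contingent coderivative satisfies |D*_M S_Ω(x̄|ȳ)|⁺ ≤ κ; in particular D*_M S_Ω(x̄|ȳ)(0) = {0}. -/

import Mathlib

open Filter Topology NormedSpace

section Defs

variable {X Y : Type*} [NormedAddCommGroup X] [NormedSpace ℝ X]
  [NormedAddCommGroup Y] [NormedSpace ℝ Y]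

/-- Restricted graph `gph S|_Ω`. -/
def GraphRes (S : X → Set Y) (Ω : Set X) : Set (X × Y) := {p | p.1 ∈ Ω ∧ p.2 ∈ S p.1}

/-- Bouligand contingent cone. -/
def Contingent (Ω : Set X) (x : X) : Set X :=
  {v | ∃ t : ℕ → ℝ, ∃ w : ℕ → X, (∀ k, 0 < t k) ∧ Tendsto t atTop (𝓝 0) ∧
    Tendsto w atTop (𝓝 v) ∧ ∀ k, x + t k • w k ∈ Ω}

/-- `J_X(T(x; Ω))`: duality-mapping image of the contingent cone. -/
def JCone (Ω : Set X) (x : X) : Set (StrongDual ℝ X) :=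
  {f | ∃ v ∈ Contingent Ω x, f v = ‖v‖ ^ 2 ∧ ‖f‖ = ‖v‖}

/-- `ε`-normals to a subset of `X × Y` (sum norm); the functional is the pair `(f, g)`. -/
def IsEpsNormalProd (C : Set (X × Y)) (p : X × Y) (ε : ℝ)
    (f : StrongDual ℝ X) (g : StrongDual ℝ Y) : Prop :=
  ∀ γ > (0 : ℝ), ∃ δ > (0 : ℝ), ∀ q ∈ C, ‖q.1 - p.1‖ + ‖q.2 - p.2‖ < δ →
    f (q.1 - p.1) + g (q.2 - p.2) ≤ (ε + γ) * (‖q.1 - p.1‖ + ‖q.2 - p.2‖)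

/-- Weak* convergence of a sequence of functionals. -/
def WeakStarTendsto (fs : ℕ → StrongDual ℝ X) (f : StrongDual ℝ X) : Prop :=
  ∀ v : X, Tendsto (fun k => fs k v) atTop (𝓝 (f v))

/-- The mixed contingent coderivative of `S` relative to `Ω` (with `Θ = Y`). -/
def MixedCoderivOm (S : X → Set Y) (Ω : Set X) (xb : X) (yb : Y)
    (ystar : StrongDual ℝ Y) : Set (StrongDual ℝ X) :=
  {xstar | ∃ (ε : ℕ → ℝ) (x : ℕ → X) (y : ℕ → Y)
      (xs : ℕ → StrongDual ℝ X) (ys : ℕ → StrongDual ℝ Y),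
    (∀ k, 0 ≤ ε k) ∧ Tendsto ε atTop (𝓝 0) ∧
    (∀ k, (x k, y k) ∈ GraphRes S Ω) ∧
    Tendsto x atTop (𝓝 xb) ∧ Tendsto y atTop (𝓝 yb) ∧
    Tendsto ys atTop (𝓝 ystar) ∧ WeakStarTendsto xs xstar ∧
    ∀ k, IsEpsNormalProd (GraphRes S Ω) (x k, y k) (ε k) (xs k) (-(ys k)) ∧
      xs k ∈ JCone Ω (x k)}

/-- `S` is PSNC relative to `Ω` at `(xb, yb)`. -/
def RelPSNC (S : X → Set Y) (Ω : Set X) (xb : X) (yb : Y) : Prop :=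
  ∀ (ε : ℕ → ℝ) (x : ℕ → X) (y : ℕ → Y) (xs : ℕ → StrongDual ℝ X) (ys : ℕ → StrongDual ℝ Y),
    (∀ k, 0 ≤ ε k) → Tendsto ε atTop (𝓝 0) →
    (∀ k, (x k, y k) ∈ GraphRes S Ω) →
    Tendsto x atTop (𝓝 xb) → Tendsto y atTop (𝓝 yb) →
    (∀ k, IsEpsNormalProd (GraphRes S Ω) (x k, y k) (ε k) (xs k) (-(ys k)) ∧
      xs k ∈ JCone Ω (x k)) →
    WeakStarTendsto xs 0 → Tendsto ys atTop (𝓝 0) →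
    Tendsto (fun k => ‖xs k‖) atTop (𝓝 0)

/-- Lipschitz-like property of `S` relative to `Ω` around `(xb, yb)` with constant `κ`. -/
def LipschitzLikeRel (S : X → Set Y) (Ω : Set X) (xb : X) (yb : Y) (κ : ℝ) : Prop :=
  ∃ V ∈ 𝓝 xb, ∃ W ∈ 𝓝 yb, ∀ x ∈ Ω ∩ V, ∀ x' ∈ Ω ∩ V, ∀ y ∈ S x' ∩ W,
    ∃ z ∈ S x, ‖y - z‖ ≤ κ * ‖x' - x‖

end Defs

/-!
Testing an `ε`-normal `(x*, -y*)` to `gph S|_Ω` at `(x, y)` along a contingent direction `v`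
of `Ω`: move `x` to `x + t w ∈ Ω`, pick by the Lipschitz-like estimate a point of `S (x + t w)`
within `κ t ‖w‖` of `y`, and the normal inequality yields `x* v ≤ (κ‖y*‖ + ε(1 + κ))‖v‖`.
For `x* = J v` this is the bound `‖x*‖ ≤ κ‖y*‖ + ε(1 + κ)` near `(x̄, ȳ)`. Letting `ε, y* → 0`
gives PSNC; passing to a weak* limit, which does not increase the norm, gives `‖x*‖ ≤ κ‖y*‖`.
-/

section DualityCone

variable {X : Type*} [NormedAddCommGroup X] [NormedSpace ℝ X]

lemma zero_mem_contingent {Ω : Set X} {x : X} (hx : x ∈ Ω) : (0 : X) ∈ Contingent Ω x :=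
  ⟨fun k => 1 / (k + 1), fun _ => 0, fun k => by positivity,
    tendsto_one_div_add_atTop_nhds_zero_nat, tendsto_const_nhds, fun k => by simpa using hx⟩

lemma zero_mem_JCone {Ω : Set X} {x : X} (hx : x ∈ Ω) : (0 : StrongDual ℝ X) ∈ JCone Ω x :=
  ⟨0, zero_mem_contingent hx, by simp, by simp⟩

lemma norm_le_of_mem_JCone {Ω : Set X} {x : X} {f : StrongDual ℝ X} {C : ℝ} (hC : 0 ≤ C)
    (hf : f ∈ JCone Ω x) (hbound : ∀ v ∈ Contingent Ω x, f v ≤ C * ‖v‖) : ‖f‖ ≤ C := by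
  obtain ⟨v, hv, hfv, hfn⟩ := hf
  rw [hfn]
  rcases (norm_nonneg v).eq_or_lt with h0 | h0
  · rwa [← h0]
  · have h := hbound v hv
    rw [hfv] at h
    nlinarith

lemma WeakStarTendsto.norm_le_of_eventually_le {xs : ℕ → StrongDual ℝ X}
    {xstar : StrongDual ℝ X} {c : ℕ → ℝ} {c₀ : ℝ} (hxs : WeakStarTendsto xs xstar)
    (hc : Tendsto c atTop (𝓝 c₀)) (hle : ∀ᶠ k in atTop, ‖xs k‖ ≤ c k) : ‖xstar‖ ≤ c₀ := by
  have hc₀ : 0 ≤ c₀ := ge_of_tendsto hc (hle.mono fun k hk => (norm_nonneg _).trans hk)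
  refine ContinuousLinearMap.opNorm_le_bound _ hc₀ fun v => ?_
  refine le_of_tendsto_of_tendsto (hxs v).norm (hc.mul_const ‖v‖) (hle.mono fun k hk => ?_)
  exact ((xs k).le_opNorm v).trans (mul_le_mul_of_nonneg_right hk (norm_nonneg v))

end DualityCone

section NormalBound

variable {X Y : Type*} [NormedAddCommGroup X] [NormedSpace ℝ X]
  [NormedAddCommGroup Y] [NormedSpace ℝ Y]

lemma apply_le_of_normal_ineq {f : StrongDual ℝ X} {g : StrongDual ℝ Y} {u : X} {d : Y}
    {κ η : ℝ} (hη : 0 ≤ η) (hd : ‖d‖ ≤ κ * ‖u‖)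
    (hN : f u + (-g) d ≤ η * (‖u‖ + ‖d‖)) :
    f u ≤ (κ * ‖g‖ + η * (1 + κ)) * ‖u‖ := by
  have hgd : g d ≤ ‖g‖ * (κ * ‖u‖) :=
    (le_abs_self _).trans ((g.le_opNorm d).trans (mul_le_mul_of_nonneg_left hd (norm_nonneg g)))
  have hηd : η * (‖u‖ + ‖d‖) ≤ η * ((1 + κ) * ‖u‖) :=
    mul_le_mul_of_nonneg_left (by linarith) hη
  rw [neg_apply] at hN
  linarith

variable {S : X → Set Y} {Ω : Set X} {x : X} {y : Y} {κ : ℝ}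
  {f : StrongDual ℝ X} {g : StrongDual ℝ Y}

lemma apply_contingent_le_of_local_normal_ineq {η δ : ℝ} (hη : 0 ≤ η) (hδ : 0 < δ)
    (hL : ∀ᶠ x' in 𝓝[Ω] x, ∃ z ∈ S x', ‖z - y‖ ≤ κ * ‖x' - x‖)
    (hN : ∀ q ∈ GraphRes S Ω, ‖q.1 - x‖ + ‖q.2 - y‖ < δ →
      f (q.1 - x) + (-g) (q.2 - y) ≤ η * (‖q.1 - x‖ + ‖q.2 - y‖))
    {v : X} (hv : v ∈ Contingent Ω x) :
    f v ≤ (κ * ‖g‖ + η * (1 + κ)) * ‖v‖ := by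
  obtain ⟨t, w, ht, ht0, hw, hmem⟩ := hv
  have hu : Tendsto (fun k => t k • w k) atTop (𝓝 0) := by simpa using ht0.smul hw
  have hx' : Tendsto (fun k => x + t k • w k) atTop (𝓝[Ω] x) :=
    tendsto_nhdsWithin_iff.2 ⟨by simpa using tendsto_const_nhds.add hu, .of_forall hmem⟩
  have hsmall0 : Tendsto (fun k => (1 + κ) * ‖t k • w k‖) atTop (𝓝 0) := by
    simpa using hu.norm.const_mul (1 + κ)
  have hsmall : ∀ᶠ k in atTop, (1 + κ) * ‖t k • w k‖ < δ := hsmall0.eventually (gt_mem_nhds hδ)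
  have hstep : ∀ᶠ k in atTop, f (w k) ≤ (κ * ‖g‖ + η * (1 + κ)) * ‖w k‖ := by
    filter_upwards [hx'.eventually hL, hsmall] with k ⟨z, hz, hzy⟩ hk
    rw [add_sub_cancel_left] at hzy
    have hq := hN (x + t k • w k, z) ⟨hmem k, hz⟩
      (by dsimp only; rw [add_sub_cancel_left]; linarith)
    dsimp only at hq
    rw [add_sub_cancel_left] at hq
    have h := apply_le_of_normal_ineq hη hzy hq
    rw [map_smul, norm_smul, Real.norm_of_nonneg (ht k).le, smul_eq_mul, mul_left_comm] at h
    exact le_of_mul_le_mul_left h (ht k)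
  exact le_of_tendsto_of_tendsto ((f.continuous.tendsto v).comp hw) (hw.norm.const_mul _) hstep

lemma IsEpsNormalProd.apply_contingent_le {ε : ℝ} (hε : 0 ≤ ε)
    (hL : ∀ᶠ x' in 𝓝[Ω] x, ∃ z ∈ S x', ‖z - y‖ ≤ κ * ‖x' - x‖)
    (hN : IsEpsNormalProd (GraphRes S Ω) (x, y) ε f (-g)) {v : X} (hv : v ∈ Contingent Ω x) :
    f v ≤ (κ * ‖g‖ + ε * (1 + κ)) * ‖v‖ := by
  have hγ : ∀ γ > (0 : ℝ), f v ≤ (κ * ‖g‖ + (ε + γ) * (1 + κ)) * ‖v‖ := fun γ hγ =>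
    let ⟨_, hδ, hNδ⟩ := hN γ hγ
    apply_contingent_le_of_local_normal_ineq (by linarith) hδ hL hNδ hv
  have hlim : Tendsto (fun γ : ℝ => (κ * ‖g‖ + (ε + γ) * (1 + κ)) * ‖v‖) (𝓝[>] 0)
      (𝓝 ((κ * ‖g‖ + ε * (1 + κ)) * ‖v‖)) :=
    tendsto_nhdsWithin_of_tendsto_nhds ((Continuous.tendsto' (by fun_prop) _ _ (by simp)))
  exact ge_of_tendsto hlim (eventually_nhdsWithin_of_forall hγ)

/-- The neighborhood necessary condition for Lipschitz-like mappings. -/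
lemma IsEpsNormalProd.norm_le_of_lipschitzLike {ε : ℝ} (hκ : 0 ≤ κ) (hε : 0 ≤ ε)
    (hL : ∀ᶠ x' in 𝓝[Ω] x, ∃ z ∈ S x', ‖z - y‖ ≤ κ * ‖x' - x‖)
    (hN : IsEpsNormalProd (GraphRes S Ω) (x, y) ε f (-g)) (hJ : f ∈ JCone Ω x) :
    ‖f‖ ≤ κ * ‖g‖ + ε * (1 + κ) :=
  norm_le_of_mem_JCone (by positivity) hJ fun _ hv => hN.apply_contingent_le hε hL hv

lemma isEpsNormalProd_zero {C : Set (X × Y)} {p : X × Y} {ε : ℝ} (hε : 0 ≤ ε) :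
    IsEpsNormalProd C p ε 0 0 := fun γ hγ =>
  ⟨1, one_pos, fun q _ _ => by simp only [zero_apply, add_zero]; positivity⟩

end NormalBound

section LipschitzLike

variable {X Y : Type*} [NormedAddCommGroup X] [NormedAddCommGroup Y]
  {S : X → Set Y} {Ω : Set X} {xb : X} {yb : Y} {κ : ℝ}

lemma LipschitzLikeRel.eventually_nhdsWithin (hLip : LipschitzLikeRel S Ω xb yb κ) :
    ∀ᶠ p : X × Y in 𝓝 (xb, yb), p ∈ GraphRes S Ω →
      ∀ᶠ x' in 𝓝[Ω] p.1, ∃ z ∈ S x', ‖z - p.2‖ ≤ κ * ‖x' - p.1‖ := by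
  obtain ⟨V, hV, W, hW, hL⟩ := hLip
  filter_upwards [(eventually_mem_nhds_iff.2 hV).prod_nhds hW]
    with ⟨x, y⟩ ⟨hxV, hyW⟩ ⟨hxΩ, hyS⟩
  filter_upwards [nhdsWithin_le_nhds hxV, self_mem_nhdsWithin] with x' hx'V hx'Ω
  obtain ⟨z, hz, hzy⟩ := hL x' ⟨hx'Ω, hx'V⟩ x ⟨hxΩ, mem_of_mem_nhds hxV⟩ y ⟨hyS, hyW⟩
  exact ⟨z, hz, by rwa [norm_sub_rev, norm_sub_rev x']⟩

variable [NormedSpace ℝ X] [NormedSpace ℝ Y]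

lemma LipschitzLikeRel.eventually_norm_le (hLip : LipschitzLikeRel S Ω xb yb κ) (hκ : 0 ≤ κ)
    {ε : ℕ → ℝ} {x : ℕ → X} {y : ℕ → Y} {xs : ℕ → StrongDual ℝ X} {ys : ℕ → StrongDual ℝ Y}
    (hε : ∀ k, 0 ≤ ε k) (hgph : ∀ k, (x k, y k) ∈ GraphRes S Ω)
    (hx : Tendsto x atTop (𝓝 xb)) (hy : Tendsto y atTop (𝓝 yb))
    (hN : ∀ k, IsEpsNormalProd (GraphRes S Ω) (x k, y k) (ε k) (xs k) (-(ys k)) ∧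
      xs k ∈ JCone Ω (x k)) :
    ∀ᶠ k in atTop, ‖xs k‖ ≤ κ * ‖ys k‖ + ε k * (1 + κ) := by
  filter_upwards [(hx.prodMk_nhds hy).eventually hLip.eventually_nhdsWithin] with k hk
  exact (hN k).1.norm_le_of_lipschitzLike hκ (hε k) (hk (hgph k)) (hN k).2

lemma zero_mem_mixedCoderivOm (hxy : (xb, yb) ∈ GraphRes S Ω) :
    (0 : StrongDual ℝ X) ∈ MixedCoderivOm S Ω xb yb 0 :=
  ⟨fun _ => 0, fun _ => xb, fun _ => yb, fun _ => 0, fun _ => 0, fun _ => le_rfl,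
    tendsto_const_nhds, fun _ => hxy, tendsto_const_nhds, tendsto_const_nhds,
    tendsto_const_nhds, fun _ => tendsto_const_nhds,
    fun _ => ⟨by simpa using isEpsNormalProd_zero le_rfl, zero_mem_JCone hxy.1⟩⟩

end LipschitzLike

theorem relative_lipschitz_implies_psnc_and_coderiv_bound_general {X Y : Type*}
    [NormedAddCommGroup X] [NormedSpace ℝ X]
    [NormedAddCommGroup Y] [NormedSpace ℝ Y]
    {S : X → Set Y} {Ω : Set X} {xb : X} {yb : Y} {κ : ℝ} (hκ : 0 ≤ κ)
    (hxy : (xb, yb) ∈ GraphRes S Ω) (hLip : LipschitzLikeRel S Ω xb yb κ) :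
    RelPSNC S Ω xb yb ∧
    (∀ ystar : StrongDual ℝ Y, ∀ xstar ∈ MixedCoderivOm S Ω xb yb ystar,
      ‖xstar‖ ≤ κ * ‖ystar‖) ∧
    MixedCoderivOm S Ω xb yb 0 = {0} := by
  have hb : ∀ ystar : StrongDual ℝ Y, ∀ xstar ∈ MixedCoderivOm S Ω xb yb ystar,
      ‖xstar‖ ≤ κ * ‖ystar‖ := by
    rintro ystar xstar ⟨ε, x, y, xs, ys, hε, hε0, hgph, hx, hy, hys, hxs, hN⟩
    refine hxs.norm_le_of_eventually_le ?_ (hLip.eventually_norm_le hκ hε hgph hx hy hN)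
    simpa using (hys.norm.const_mul κ).add (hε0.mul_const (1 + κ))
  refine ⟨fun ε x y xs ys hε hε0 hgph hx hy hN _ hys => ?_, hb, ?_⟩
  · refine squeeze_zero' (.of_forall fun k => norm_nonneg _)
      (hLip.eventually_norm_le hκ hε hgph hx hy hN) ?_
    simpa using (hys.norm.const_mul κ).add (hε0.mul_const (1 + κ))
  · refine Set.eq_singleton_iff_unique_mem.2 ⟨zero_mem_mixedCoderivOm hxy, fun xstar h => ?_⟩
    simpa using hb 0 xstar h

/-- Necessity in the pointbased characterization: if `S` is Lipschitz-like relative to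
`Ω` around `(xb, yb)` with constant `κ`, then (a) `S` is PSNC relative to `Ω` at
`(xb, yb)`, (b) `|D*_M S_Ω(xb|yb)|⁺ ≤ κ`, and in particular
`D*_M S_Ω(xb|yb)(0) = {0}`. -/
theorem relative_lipschitz_implies_psnc_and_coderiv_bound {X Y : Type*}
    [NormedAddCommGroup X] [NormedSpace ℝ X] [CompleteSpace X]
    [NormedAddCommGroup Y] [NormedSpace ℝ Y] [CompleteSpace Y]
    {S : X → Set Y} {Ω : Set X} {xb : X} {yb : Y} {κ : ℝ} (hκ : 0 ≤ κ)
    (hxy : (xb, yb) ∈ GraphRes S Ω) (hLip : LipschitzLikeRel S Ω xb yb κ) :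
    RelPSNC S Ω xb yb ∧
    (∀ ystar : StrongDual ℝ Y, ∀ xstar ∈ MixedCoderivOm S Ω xb yb ystar,
      ‖xstar‖ ≤ κ * ‖ystar‖) ∧
    MixedCoderivOm S Ω xb yb 0 = {0} :=
  relative_lipschitz_implies_psnc_and_coderiv_bound_general hκ hxy hLip
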